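/- Let h be a Hoffman graph and p a positive integer. Let G(h, p) be the graph obtained from h by replacing every fat vertex by a clique K_p of p new (slim) vertices, each vertex of which is joined to all neighbors of the corresponding fat vertex. Then λ_min(G(h, p)) ≥ λ_min(h), and λ_min(G(h, p)) → λ_min(h) as p → ∞. -/

import Mathlib

/-!
Write a vector on the vertices of `G(h,p)` as `(x, y)`, with `x` on the slim vertices and `y` on
the `p` copies of the fat vertices, and let `E` sum `y` over the copies of each fat vertex. Then
the adjacency form is `x·S(h)x + ‖Cᵀx + Ey‖² - ‖y‖²`. Every fat vertex has a slim neighbour, so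
`λ_min(h) ≤ -1`, and the form is at least `λ_min(h) (‖x‖² + ‖y‖²)`. Conversely, if `x` is an
eigenvector of `S(h)` for `λ_min(h)`, putting `-(Cᵀx)_f / p` on each copy of `f` kills the square
and only adds `‖Cᵀx‖² / p` to `‖y‖²`, so the Rayleigh quotient tends to `λ_min(h)`.
-/

open Matrix Filter

/-- The smallest eigenvalue of a real matrix (infimum of its spectrum). -/
noncomputable def minEigM {n : Type*} [Fintype n] [DecidableEq n] (A : Matrix n n ℝ) : ℝ :=
  sInf (spectrum ℝ A)

/-- The largest eigenvalue of a real matrix (supremum of its spectrum). -/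
noncomputable def maxEigM {n : Type*} [Fintype n] [DecidableEq n] (A : Matrix n n ℝ) : ℝ :=
  sSup (spectrum ℝ A)

/-- The smallest adjacency eigenvalue of a finite simple graph. -/
noncomputable def graphMinEig {V : Type*} [Fintype V] [DecidableEq V] (G : SimpleGraph V) : ℝ := by
  classical exact minEigM (G.adjMatrix ℝ)

/-- The largest adjacency eigenvalue of a finite simple graph. -/
noncomputable def graphMaxEig {V : Type*} [Fintype V] [DecidableEq V] (G : SimpleGraph V) : ℝ := by
  classical exact maxEigM (G.adjMatrix ℝ)

/-- A Hoffman graph: a graph with vertices labelled fat/slim such that fat vertices are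
pairwise non-adjacent and every fat vertex has a slim neighbor. -/
structure HoffmanGraph (V : Type*) where
  G : SimpleGraph V
  isFat : V → Bool
  fat_not_adj : ∀ u v, isFat u → isFat v → ¬ G.Adj u v
  fat_has_slim : ∀ u, isFat u → ∃ v, isFat v = false ∧ G.Adj u v

/-- The special matrix `S(h) = A_s - C Cᵀ` of a Hoffman graph, indexed by slim vertices. -/
noncomputable def HoffmanGraph.specialMatrix {V : Type*} [Fintype V] [DecidableEq V]
    (h : HoffmanGraph V) :
    Matrix {v // h.isFat v = false} {v // h.isFat v = false} ℝ := by
  classical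
  exact fun a b => (h.G.adjMatrix ℝ) a.1 b.1 -
    ∑ f : {v // h.isFat v = true}, (h.G.adjMatrix ℝ) a.1 f.1 * (h.G.adjMatrix ℝ) b.1 f.1

/-- The smallest eigenvalue of a Hoffman graph: the smallest eigenvalue of its
special matrix. -/
noncomputable def HoffmanGraph.minEig {V : Type*} [Fintype V] [DecidableEq V]
    (h : HoffmanGraph V) : ℝ :=
  minEigM h.specialMatrix

/-- `G(h,p)`: replace every fat vertex of the Hoffman graph `h` by a clique `K_p`,
each of whose vertices is joined to all neighbors of the corresponding fat vertex. -/
def HoffmanGraph.replace {V : Type*} (h : HoffmanGraph V) (p : ℕ) :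
    SimpleGraph ({v // h.isFat v = false} ⊕ ({v // h.isFat v = true} × Fin p)) where
  Adj x y :=
    match x, y with
    | Sum.inl a, Sum.inl b => h.G.Adj a.1 b.1
    | Sum.inl a, Sum.inr (f, _) => h.G.Adj a.1 f.1
    | Sum.inr (f, _), Sum.inl a => h.G.Adj a.1 f.1
    | Sum.inr (f, i), Sum.inr (g, j) => f = g ∧ i ≠ j
  symm := ⟨by
    rintro (a | ⟨f, i⟩) (b | ⟨g, j⟩) hadj
    · exact hadj.symm
    · exact hadj
    · exact hadj
    · exact ⟨hadj.1.symm, hadj.2.symm⟩⟩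
  loopless := ⟨by
    rintro (a | ⟨f, i⟩) hadj
    · exact h.G.irrefl hadj
    · exact hadj.2 rfl⟩

section MinEig

theorem dotProduct_self_nonneg {n R : Type*} [Fintype n] [Ring R] [LinearOrder R]
    [IsStrictOrderedRing R] (v : n → R) : 0 ≤ v ⬝ᵥ v :=
  Finset.sum_nonneg fun i _ => mul_self_nonneg (v i)

variable {n : Type*} [Fintype n] [DecidableEq n] {A : Matrix n n ℝ}

theorem Matrix.exists_mulVec_eq_smul_of_mem_spectrum {K : Type*} [Field K] {A : Matrix n n K}
    {a : K} (ha : a ∈ spectrum K A) : ∃ v ≠ 0, A *ᵥ v = a • v := by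
  rw [← spectrum_toLin', ← Module.End.hasEigenvalue_iff_mem_spectrum] at ha
  obtain ⟨v, hv⟩ := ha.exists_hasEigenvector
  exact ⟨v, hv.2, by simpa using hv.apply_eq_smul⟩

theorem minEigM_of_isEmpty [IsEmpty n] (A : Matrix n n ℝ) : minEigM A = 0 := by
  rw [minEigM, spectrum.of_subsingleton, Real.sInf_empty]

theorem minEigM_mem_spectrum [Nonempty n] (hA : A.IsHermitian) : minEigM A ∈ spectrum ℝ A :=
  Set.Nonempty.csInf_mem ⟨_, hA.eigenvalues_mem_spectrum_real (Classical.arbitrary n)⟩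
    finite_real_spectrum

theorem minEigM_mul_dotProduct_self_le (hA : A.IsHermitian) (x : n → ℝ) :
    minEigM A * (x ⬝ᵥ x) ≤ x ⬝ᵥ (A *ᵥ x) := by
  have hpsd : (A - algebraMap ℝ _ (minEigM A)).PosSemidef := by
    refine posSemidef_iff_isHermitian_and_spectrum_nonneg.mpr
      ⟨hA.sub (isHermitian_diagonal _), ?_⟩
    rw [← spectrum.sub_singleton_eq]
    rintro _ ⟨a, ha, _, rfl, rfl⟩
    exact sub_nonneg.mpr (csInf_le finite_real_spectrum.bddBelow ha)
  have := hpsd.dotProduct_mulVec_nonneg x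
  rwa [Algebra.algebraMap_eq_smul_one, sub_mulVec, smul_mulVec, one_mulVec,
    dotProduct_sub, dotProduct_smul, smul_eq_mul, sub_nonneg] at this

theorem le_minEigM [Nonempty n] (hA : A.IsHermitian) {μ : ℝ}
    (hμ : ∀ x : n → ℝ, μ * (x ⬝ᵥ x) ≤ x ⬝ᵥ (A *ᵥ x)) : μ ≤ minEigM A := by
  refine le_csInf ⟨_, hA.eigenvalues_mem_spectrum_real (Classical.arbitrary n)⟩ fun a ha => ?_
  obtain ⟨v, hv, hAv⟩ := exists_mulVec_eq_smul_of_mem_spectrum ha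
  have hvv : 0 < v ⬝ᵥ v := by simpa using dotProduct_self_star_pos_iff.mpr hv
  have := hμ v
  rw [hAv, dotProduct_smul, smul_eq_mul] at this
  exact le_of_mul_le_mul_right this hvv

end MinEig

noncomputable def copyIncidence (F I : Type*) [DecidableEq F] : Matrix F (F × I) ℝ :=
  of fun f q => if q.1 = f then 1 else 0

section CopyIncidence

variable {m F I : Type*} [Fintype F] [DecidableEq F]

omit [Fintype F] in
@[simp] theorem copyIncidence_apply (f : F) (q : F × I) :
    copyIncidence F I f q = if q.1 = f then 1 else 0 := rfl

theorem mul_copyIncidence_apply (M : Matrix m F ℝ) (a : m) (q : F × I) :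
    (M * copyIncidence F I) a q = M a q.1 := by
  simp [copyIncidence, mul_apply]

theorem transpose_copyIncidence_mul_apply (M : Matrix F m ℝ) (q : F × I) (b : m) :
    ((copyIncidence F I)ᵀ * M) q b = M q.1 b := by
  simp [copyIncidence, mul_apply]

theorem copyIncidence_mul_transpose [Fintype I] :
    copyIncidence F I * (copyIncidence F I)ᵀ = (Fintype.card I : ℝ) • 1 := by
  ext f g
  by_cases hfg : f = g
  · subst hfg; simp [copyIncidence, mul_apply, Fintype.sum_prod_type]
  · simp [copyIncidence, mul_apply, Fintype.sum_prod_type, hfg, Ne.symm hfg]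

end CopyIncidence

namespace HoffmanGraph

variable {V : Type*} (h : HoffmanGraph V)

abbrev Slim : Type _ := {v // h.isFat v = false}

abbrev Fat : Type _ := {v // h.isFat v = true}

section Replace

variable {p : ℕ} {a b : h.Slim} {f g : h.Fat} {i j : Fin p}

@[simp] theorem replace_adj_inl_inl : (h.replace p).Adj (.inl a) (.inl b) ↔ h.G.Adj a b := Iff.rfl
@[simp] theorem replace_adj_inl_inr : (h.replace p).Adj (.inl a) (.inr (f, i)) ↔ h.G.Adj a f :=
  Iff.rfl
@[simp] theorem replace_adj_inr_inl : (h.replace p).Adj (.inr (f, i)) (.inl a) ↔ h.G.Adj a f :=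
  Iff.rfl
@[simp] theorem replace_adj_inr_inr :
    (h.replace p).Adj (.inr (f, i)) (.inr (g, j)) ↔ f = g ∧ i ≠ j := Iff.rfl

end Replace

variable [Fintype V] [DecidableEq V]

open scoped Classical in
noncomputable def slimAdjMatrix : Matrix h.Slim h.Slim ℝ :=
  of fun a b => if h.G.Adj a b then 1 else 0

open scoped Classical in
noncomputable def fatIncidence : Matrix h.Slim h.Fat ℝ :=
  of fun a f => if h.G.Adj a f then 1 else 0

theorem specialMatrix_eq_sub_mul_transpose :
    h.specialMatrix = h.slimAdjMatrix - h.fatIncidence * h.fatIncidenceᵀ := by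
  ext a b
  simp [specialMatrix, slimAdjMatrix, fatIncidence, mul_apply, SimpleGraph.adjMatrix_apply]

theorem specialMatrix_isHermitian : h.specialMatrix.IsHermitian := by
  classical
  rw [specialMatrix_eq_sub_mul_transpose]
  refine .sub ?_ (isHermitian_mul_conjTranspose_self _)
  ext a b
  simp [slimAdjMatrix, h.G.adj_comm]

theorem adjMatrix_replace (p : ℕ) [DecidableRel (h.replace p).Adj] :
    (h.replace p).adjMatrix ℝ =
      fromBlocks h.slimAdjMatrix (h.fatIncidence * copyIncidence h.Fat (Fin p))
        ((copyIncidence h.Fat (Fin p))ᵀ * h.fatIncidenceᵀ)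
        ((copyIncidence h.Fat (Fin p))ᵀ * copyIncidence h.Fat (Fin p) - 1) := by
  classical
  refine Matrix.ext fun u w => ?_
  rw [SimpleGraph.adjMatrix_apply]
  rcases u with a | ⟨f, i⟩ <;> rcases w with b | ⟨g, j⟩
  · simp [slimAdjMatrix]
  · simp [fatIncidence, mul_copyIncidence_apply]
  · simp [fatIncidence, transpose_copyIncidence_mul_apply]
  · rcases eq_or_ne f g with rfl | hfg
    · by_cases hij : i = j <;> simp [transpose_copyIncidence_mul_apply, one_apply, hij]
    · simp [transpose_copyIncidence_mul_apply, one_apply, hfg, hfg.symm]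

theorem dotProduct_adjMatrix_replace_mulVec (p : ℕ) [DecidableRel (h.replace p).Adj]
    (x : h.Slim → ℝ) (y : h.Fat × Fin p → ℝ) :
    Sum.elim x y ⬝ᵥ ((h.replace p).adjMatrix ℝ *ᵥ Sum.elim x y) =
      x ⬝ᵥ (h.specialMatrix *ᵥ x)
        + (x ᵥ* h.fatIncidence + copyIncidence h.Fat (Fin p) *ᵥ y)
          ⬝ᵥ (x ᵥ* h.fatIncidence + copyIncidence h.Fat (Fin p) *ᵥ y)
        - y ⬝ᵥ y := by
  rw [adjMatrix_replace, fromBlocks_mulVec, sumElim_dotProduct_sumElim, specialMatrix_eq_sub_mul_transpose]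
  set C := h.fatIncidence
  set E := copyIncidence h.Fat (Fin p)
  have hxy : x ⬝ᵥ (C * E) *ᵥ y = (x ᵥ* C) ⬝ᵥ (E *ᵥ y) := by
    rw [← mulVec_mulVec, dotProduct_mulVec]
  have hyx : y ⬝ᵥ (Eᵀ * Cᵀ) *ᵥ x = (x ᵥ* C) ⬝ᵥ (E *ᵥ y) := by
    rw [← mulVec_mulVec, dotProduct_mulVec, vecMul_transpose, mulVec_transpose, dotProduct_comm]
  have hyy : y ⬝ᵥ (Eᵀ * E) *ᵥ y = (E *ᵥ y) ⬝ᵥ (E *ᵥ y) := by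
    rw [← mulVec_mulVec, dotProduct_mulVec, vecMul_transpose]
  have hxx : x ⬝ᵥ (C * Cᵀ) *ᵥ x = (x ᵥ* C) ⬝ᵥ (x ᵥ* C) := by
    rw [← mulVec_mulVec, dotProduct_mulVec, mulVec_transpose]
  simp only [Sum.elim_comp_inl, Sum.elim_comp_inr, dotProduct_add, add_dotProduct, sub_mulVec,
    dotProduct_sub, one_mulVec, hxy, hyx, hyy, hxx]
  rw [dotProduct_comm (E *ᵥ y) (x ᵥ* C)]
  ring

theorem minEig_le_neg_one [Nonempty h.Fat] : h.minEig ≤ -1 := by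
  obtain ⟨f⟩ := ‹Nonempty h.Fat›
  obtain ⟨v, hv, hfv⟩ := h.fat_has_slim f f.2
  set a : h.Slim := ⟨v, hv⟩
  have hdeg : 1 ≤ ∑ g, h.fatIncidence a g * h.fatIncidence a g := by
    have hf : h.fatIncidence a f * h.fatIncidence a f = 1 := by
      simp [fatIncidence, a, hfv.symm]
    exact hf ▸ Finset.single_le_sum (fun g _ => mul_self_nonneg _) (Finset.mem_univ f)
  have hray := minEigM_mul_dotProduct_self_le h.specialMatrix_isHermitian (Pi.single a 1)
  calc h.minEig = minEigM h.specialMatrix * (Pi.single a 1 ⬝ᵥ Pi.single a 1) := by simp [minEig]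
    _ ≤ h.specialMatrix a a := by simpa using hray
    _ = -∑ g, h.fatIncidence a g * h.fatIncidence a g := by
      simp [specialMatrix_eq_sub_mul_transpose, slimAdjMatrix, mul_apply]
    _ ≤ -1 := neg_le_neg hdeg

theorem minEig_le_graphMinEig_replace [Nonempty h.Slim] (p : ℕ) :
    h.minEig ≤ graphMinEig (h.replace p) := by
  classical
  rw [graphMinEig]
  refine le_minEigM ((h.replace p).isHermitian_adjMatrix ℝ) fun z => ?_
  obtain ⟨x, y, rfl⟩ : ∃ x y, z = Sum.elim x y := ⟨_, _, (Sum.elim_comp_inl_inr z).symm⟩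
  rw [dotProduct_adjMatrix_replace_mulVec, sumElim_dotProduct_sumElim]
  have hx : h.minEig * (x ⬝ᵥ x) ≤ x ⬝ᵥ (h.specialMatrix *ᵥ x) :=
    minEigM_mul_dotProduct_self_le h.specialMatrix_isHermitian x
  have hy : h.minEig * (y ⬝ᵥ y) ≤ -(y ⬝ᵥ y) := by
    rcases isEmpty_or_nonempty h.Fat with hF | hF
    · simp
    · nlinarith [h.minEig_le_neg_one, dotProduct_self_nonneg y]
  nlinarith [dotProduct_self_nonneg
    (x ᵥ* h.fatIncidence + copyIncidence h.Fat (Fin p) *ᵥ y)]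

theorem graphMinEig_replace_mul_le {p : ℕ} (hp : 0 < p) (x : h.Slim → ℝ) :
    graphMinEig (h.replace p) *
        (x ⬝ᵥ x + (x ᵥ* h.fatIncidence) ⬝ᵥ (x ᵥ* h.fatIncidence) / p) ≤
      x ⬝ᵥ (h.specialMatrix *ᵥ x) - (x ᵥ* h.fatIncidence) ⬝ᵥ (x ᵥ* h.fatIncidence) / p := by
  classical
  set u := x ᵥ* h.fatIncidence
  set E := copyIncidence h.Fat (Fin p)
  have hp' : (p : ℝ) ≠ 0 := by positivity
  have hEE : E * Eᵀ = (p : ℝ) • 1 := by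
    simpa using copyIncidence_mul_transpose (F := h.Fat) (I := Fin p)
  -- spreading `-u f` evenly over the `p` copies of `f` kills the `u + E y` term
  set y : h.Fat × Fin p → ℝ := -(p : ℝ)⁻¹ • (Eᵀ *ᵥ u)
  have hEy : E *ᵥ y = -u := by
    simp only [y]
    rw [neg_smul, mulVec_neg, mulVec_smul, mulVec_mulVec, hEE, smul_mulVec, one_mulVec, smul_smul,
      inv_mul_cancel₀ hp', one_smul]
  have hyy : y ⬝ᵥ y = u ⬝ᵥ u / p := by
    have : (Eᵀ *ᵥ u) ⬝ᵥ (Eᵀ *ᵥ u) = p * (u ⬝ᵥ u) := by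
      nth_rw 1 [mulVec_transpose]
      rw [← dotProduct_mulVec, mulVec_mulVec, hEE, smul_mulVec, one_mulVec,
        dotProduct_smul, smul_eq_mul]
    simp only [y, smul_dotProduct, dotProduct_smul, this, smul_eq_mul]
    field_simp
  have := minEigM_mul_dotProduct_self_le ((h.replace p).isHermitian_adjMatrix ℝ) (Sum.elim x y)
  rwa [dotProduct_adjMatrix_replace_mulVec, sumElim_dotProduct_sumElim, hEy, add_neg_cancel,
    zero_dotProduct, add_zero, hyy] at this

theorem tendsto_graphMinEig_replace [Nonempty h.Slim] :
    Tendsto (fun p => graphMinEig (h.replace p)) atTop (nhds h.minEig) := by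
  obtain ⟨v, hv, hSv⟩ :=
    exists_mulVec_eq_smul_of_mem_spectrum (minEigM_mem_spectrum h.specialMatrix_isHermitian)
  set N := v ⬝ᵥ v
  set c := (v ᵥ* h.fatIncidence) ⬝ᵥ (v ᵥ* h.fatIncidence)
  have hN : 0 < N := by simpa using dotProduct_self_star_pos_iff.mpr hv
  have hvSv : v ⬝ᵥ (h.specialMatrix *ᵥ v) = h.minEig * N := by
    rw [hSv, dotProduct_smul, smul_eq_mul]; rfl
  have hbound : Tendsto (fun p : ℕ => (h.minEig * N - c / p) / (N + c / p)) atTop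
      (nhds h.minEig) := by
    have hc := tendsto_const_div_atTop_nhds_zero_nat c
    have := (tendsto_const_nhds (x := h.minEig * N)).sub hc |>.div
      ((tendsto_const_nhds (x := N)).add hc) (by simpa using hN.ne')
    rwa [sub_zero, add_zero, mul_div_cancel_right₀ _ hN.ne'] at this
  refine tendsto_of_tendsto_of_tendsto_of_le_of_le' tendsto_const_nhds hbound
    (.of_forall h.minEig_le_graphMinEig_replace) ?_
  filter_upwards [eventually_gt_atTop 0] with p hp
  have hc : 0 ≤ c / p := div_nonneg (dotProduct_self_nonneg _) p.cast_nonneg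
  rw [le_div_iff₀ (add_pos_of_pos_of_nonneg hN hc), ← hvSv]
  exact h.graphMinEig_replace_mul_le hp v

end HoffmanGraph

/-- `λ_min(G(h,p)) ≥ λ_min(h)` for every positive integer `p`, and
`λ_min(G(h,p)) → λ_min(h)` as `p → ∞`. -/
theorem stmt6 {V : Type*} [Fintype V] [DecidableEq V] (h : HoffmanGraph V) :
    (∀ p : ℕ, 0 < p → h.minEig ≤ graphMinEig (h.replace p)) ∧
      Filter.Tendsto (fun p : ℕ => graphMinEig (h.replace p)) Filter.atTop (nhds h.minEig) := by
  rcases isEmpty_or_nonempty h.Slim with hS | hS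
  -- no vertices at all: both sides are the junk value `sInf ∅ = 0`
  · have : IsEmpty h.Fat := ⟨fun f => by
      obtain ⟨v, hv, -⟩ := h.fat_has_slim f f.2
      exact hS.false ⟨v, hv⟩⟩
    simp [graphMinEig, HoffmanGraph.minEig, minEigM_of_isEmpty]
  · exact ⟨fun p _ => h.minEig_le_graphMinEig_replace p, h.tendsto_graphMinEig_replace⟩
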